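/- Let g₁ and g₂ be elements of the coset ⟨h⟩b = { hⁱ b : i ∈ ℤ } both having order 4. Then g₁ and g₂ are conjugate in N. Consequently the elements of order 4 in ⟨h⟩b form a single conjugacy class of N. -/

import Mathlib

/-!
Conjugation by `b` acts on `⟨h⟩` as `x ↦ x ^ q` and `b² = 1`, so `(hⁿ b)² = h^{n(q+1)}`.
As `h` has order `(q - 1)(q + 1)`, the element `hⁿ b` has order `4` exactly when `q - 1 ∣ 2n`
but `q - 1 ∤ n`, and any two such `n` are congruent modulo `q - 1`. Conjugation by `hᵗ` sends
`hⁿ b` to `h^{n + t(1 - q)} b`, so it realises every such shift of `n`.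
-/

theorem Int.dvd_sub_of_dvd_two_mul_of_not_dvd {d i j : ℤ} (hi₂ : d ∣ 2 * i) (hi : ¬ d ∣ i)
    (hj₂ : d ∣ 2 * j) (hj : ¬ d ∣ j) : d ∣ i - j := by
  have odd_of_not_dvd : ∀ {k u : ℤ}, 2 * k = d * u → ¬ d ∣ k → Odd u := by
    intro k u hu hk
    rw [← Int.not_even_iff_odd]
    rintro ⟨a, rfl⟩
    exact hk ⟨a, by linarith⟩
  obtain ⟨u, hu⟩ := hi₂
  obtain ⟨v, hv⟩ := hj₂
  obtain ⟨a, rfl⟩ := odd_of_not_dvd hu hi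
  obtain ⟨c, rfl⟩ := odd_of_not_dvd hv hj
  exact ⟨a - c, by linarith⟩

section SemidirectRelation

variable {G : Type*} [Group G] {h b : G} {q : ℤ}

theorem mul_zpow_eq_zpow_mul_of_conj (hrel : b * h * b⁻¹ = h ^ q) (n : ℤ) :
    b * h ^ n = h ^ (q * n) * b := by
  rw [← mul_inv_eq_iff_eq_mul, ← conj_zpow, hrel, ← zpow_mul]

theorem zpow_mul_sq_of_conj (hrel : b * h * b⁻¹ = h ^ q) (hb : b ^ 2 = 1) (n : ℤ) :
    (h ^ n * b) ^ 2 = h ^ (n * (q + 1)) := by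
  rw [sq, mul_assoc, ← mul_assoc b, mul_zpow_eq_zpow_mul_of_conj hrel, mul_assoc, ← sq, hb,
    mul_one, ← zpow_add]
  ring_nf

theorem zpow_conj_zpow_mul_of_conj (hrel : b * h * b⁻¹ = h ^ q) (n t : ℤ) :
    h ^ t * (h ^ n * b) * (h ^ t)⁻¹ = h ^ (n + t * (1 - q)) * b := by
  rw [← zpow_neg, ← mul_assoc, ← zpow_add, mul_assoc, mul_zpow_eq_zpow_mul_of_conj hrel,
    ← mul_assoc, ← zpow_add]
  ring_nf

theorem isConj_zpow_mul_of_dvd_sub (hrel : b * h * b⁻¹ = h ^ q) {i j : ℤ} (hij : q - 1 ∣ i - j) :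
    IsConj (h ^ i * b) (h ^ j * b) := by
  obtain ⟨w, hw⟩ := hij
  refine isConj_iff.mpr ⟨h ^ w, ?_⟩
  rw [zpow_conj_zpow_mul_of_conj hrel]
  congr 2
  linarith

theorem dvd_two_mul_and_not_dvd_of_orderOf_zpow_mul_eq_four (hrel : b * h * b⁻¹ = h ^ q)
    (hb : b ^ 2 = 1) (horder : (orderOf h : ℤ) = q ^ 2 - 1) {n : ℤ}
    (hn : orderOf (h ^ n * b) = 4) : q - 1 ∣ 2 * n ∧ ¬ q - 1 ∣ n := by
  have hsq := zpow_mul_sq_of_conj hrel hb n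
  have hsq_ne : ¬ h ^ (n * (q + 1)) = 1 := by
    rw [← hsq]
    intro h2
    have := hn ▸ orderOf_dvd_of_pow_eq_one h2
    norm_num at this
  have hfourth : h ^ (2 * n * (q + 1)) = 1 := by
    rw [show 2 * n * (q + 1) = n * (q + 1) * (2 : ℕ) by push_cast; ring, zpow_mul, zpow_natCast,
      ← hsq, ← pow_mul]
    simpa [hn] using pow_orderOf_eq_one (h ^ n * b)
  have hq : q + 1 ≠ 0 := fun hq => hsq_ne (by rw [hq, mul_zero, zpow_zero])
  rw [← orderOf_dvd_iff_zpow_eq_one (x := h), horder] at hsq_ne hfourth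
  rw [show q ^ 2 - 1 = (q - 1) * (q + 1) by ring] at hsq_ne hfourth
  exact ⟨(mul_dvd_mul_iff_right hq).mp hfourth, fun hd => hsq_ne (mul_dvd_mul_right hd _)⟩

end SemidirectRelation

theorem singer_normalizer_order_four_conj_general
    (p k₀ : ℕ) (hp : p.Prime)
    (G : Type) [Group G] (h b : G)
    (hh : orderOf h = (p ^ k₀) ^ 2 - 1)
    (hb : orderOf b = 2)
    (hrel : b * h * b⁻¹ = h ^ (p ^ k₀))
    (g₁ g₂ : G)
    (hg₁ : ∃ i : ℤ, g₁ = h ^ i * b) (hg₂ : ∃ i : ℤ, g₂ = h ^ i * b)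
    (ho₁ : orderOf g₁ = 4) (ho₂ : orderOf g₂ = 4) :
    IsConj g₁ g₂ := by
  obtain ⟨i, rfl⟩ := hg₁
  obtain ⟨j, rfl⟩ := hg₂
  set q : ℤ := ((p ^ k₀ : ℕ) : ℤ)
  have hrel' : b * h * b⁻¹ = h ^ q := by rw [hrel, zpow_natCast]
  have hb' : b ^ 2 = 1 := hb ▸ pow_orderOf_eq_one b
  have horder : (orderOf h : ℤ) = q ^ 2 - 1 := by
    rw [hh, Nat.cast_sub (Nat.one_le_pow _ _ (pow_pos hp.pos _))]
    push_cast
    rfl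
  obtain ⟨hi₂, hi⟩ := dvd_two_mul_and_not_dvd_of_orderOf_zpow_mul_eq_four hrel' hb' horder ho₁
  obtain ⟨hj₂, hj⟩ := dvd_two_mul_and_not_dvd_of_orderOf_zpow_mul_eq_four hrel' hb' horder ho₂
  exact isConj_zpow_mul_of_dvd_sub hrel' (Int.dvd_sub_of_dvd_two_mul_of_not_dvd hi₂ hi hj₂ hj)

/-- In the abstract model `N = ⟨h⟩ ⋊ ⟨b⟩` of the normalizer of a Singer cycle of
`GL(2,q)` (with `orderOf h = q² - 1`, `orderOf b = 2`, `b h b⁻¹ = h^q`), any two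
elements of order 4 in the coset `⟨h⟩b` are conjugate in `N`. -/
theorem singer_normalizer_order_four_conj
    (p k₀ : ℕ) (hp : p.Prime) (hk₀ : 1 ≤ k₀)
    (G : Type) [Group G] (h b : G)
    (hgen : Subgroup.closure ({h, b} : Set G) = ⊤)
    (hh : orderOf h = (p ^ k₀) ^ 2 - 1)
    (hb : orderOf b = 2)
    (hrel : b * h * b⁻¹ = h ^ (p ^ k₀))
    (g₁ g₂ : G)
    (hg₁ : ∃ i : ℤ, g₁ = h ^ i * b) (hg₂ : ∃ i : ℤ, g₂ = h ^ i * b)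
    (ho₁ : orderOf g₁ = 4) (ho₂ : orderOf g₂ = 4) :
    IsConj g₁ g₂ :=
  singer_normalizer_order_four_conj_general p k₀ hp G h b hh hb hrel g₁ g₂ hg₁ hg₂ ho₁ ho₂
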